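/- arXiv:2106.06627 — 3 statements merged into one kernel-verified Lean document; each statement's English description precedes it below -/
import Mathlib

section
/- Let α ≥ 1 and γ > 0. If P > 16·γ/(1+α), then R = (1+α)·P / (2·sqrt(γ·(1+α)·P) + 2·γ) > 1; i.e., FedP2P has strictly lower communication time than FedAvg. -/
theorem speedup_ratio_gt_one_of_large_P (α γ P : ℝ) (hα : 1 ≤ α) (hγ : 0 < γ)
    (hP : P > 16 * γ / (1 + α)) :
    (1 + α) * P / (2 * Real.sqrt (γ * (1 + α) * P) + 2 * γ) > 1 := by
  have hα0 : (0:ℝ) < 1 + α := by linarith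
  have hx : 16 * γ < (1 + α) * P := by
    have := (div_lt_iff₀ hα0).mp hP
    linarith
  have hxpos : 0 < (1 + α) * P := by linarith
  have hs : Real.sqrt (γ * (1 + α) * P) < (1 + α) * P / 4 := by
    have h1 : γ * (1 + α) * P < ((1 + α) * P / 4) ^ 2 := by
      have h2 : γ < (1 + α) * P / 16 := by linarith
      have := mul_lt_mul_of_pos_right h2 hxpos
      calc γ * (1 + α) * P = γ * ((1 + α) * P) := by ring
        _ < (1 + α) * P / 16 * ((1 + α) * P) := this
        _ ≤ ((1 + α) * P / 4) ^ 2 := by nlinarith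
    exact (Real.sqrt_lt' (by positivity)).mpr h1
  have hsnn : 0 ≤ Real.sqrt (γ * (1 + α) * P) := Real.sqrt_nonneg _
  have hden : 0 < 2 * Real.sqrt (γ * (1 + α) * P) + 2 * γ := by linarith
  rw [gt_iff_lt, lt_div_iff₀ hden]
  nlinarith
end

section
/- Let H_avg = (1+α)·M·P/B_s and H_p2p(L) = (1+α)·L·M/B_s + P·M/(L·B_d) + 2·M/B_d with M, B_s, B_d, P > 0, α ≥ 1. If B_s ≤ B_d and P ≥ 16, then there exists L > 0 with H_p2p(L) < H_avg. -/
theorem fedp2p_beats_fedavg (M Bs Bd P α : ℝ)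
    (hM : 0 < M) (hBs : 0 < Bs) (hBd : 0 < Bd) (hP : 0 < P) (hα : 1 ≤ α)
    (hband : Bs ≤ Bd) (hP16 : 16 ≤ P) :
    ∃ L : ℝ, 0 < L ∧
      (1 + α) * L * M / Bs + P * M / (L * Bd) + 2 * M / Bd < (1 + α) * M * P / Bs := by
  refine ⟨P / 4, by positivity, ?_⟩
  have h2 : P * M / ((P / 4) * Bd) = 4 * M / Bd := by
    field_simp
  rw [h2]
  have hmd : M / Bd ≤ M / Bs := div_le_div_of_nonneg_left hM.le hBs hband
  have hms : 0 < M / Bs := by positivity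
  have e1 : (1 + α) * (P / 4) * M / Bs = (1 + α) * P / 4 * (M / Bs) := by ring
  have e2 : 4 * M / Bd = 4 * (M / Bd) := by ring
  have e3 : 2 * M / Bd = 2 * (M / Bd) := by ring
  have e4 : (1 + α) * M * P / Bs = (1 + α) * P * (M / Bs) := by ring
  rw [e1, e2, e3, e4]
  nlinarith [mul_le_mul_of_nonneg_left hP16 (by linarith : (0:ℝ) ≤ 1 + α)]
end

section
/- Let α ≥ 1, γ > 0, P > 0, M > 0, B_s > 0, B_d = B_s/γ. Then H_avg / min H_p2p = (1+α)P / (2·sqrt(γ·(1+α)·P) + 2γ), where H_avg = (1+α)MP/B_s and min H_p2p = (2M/B_d)·(P/L* + 1) with L* = sqrt(B_s·P/((1+α)B_d)). -/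
/-! With `B_d = B_s / γ` the optimal number of networks is `L* = √(γ P / (1 + α))`, so the
P2P term `γ · P / L*` collapses to `√(γ (1 + α) P)`; everything else is cancelling `M` and `B_s`. -/

theorem fedAvg_div_fedP2P_time (a γ P M Bs L : ℝ) (hγ : γ ≠ 0) (hM : M ≠ 0) (hBs : Bs ≠ 0) :
    (a * M * P / Bs) / ((2 * M / (Bs / γ)) * (P / L + 1)) =
      a * P / (2 * (γ * (P / L)) + 2 * γ) := by
  rw [div_div_eq_mul_div, show 2 * (γ * (P / L)) + 2 * γ = 2 * γ * (P / L + 1) by ring]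
  field_simp

theorem mul_div_sqrt_optimal_count (a γ P : ℝ) (ha : 0 < a) (hγ : 0 ≤ γ) (hP : 0 ≤ P) :
    γ * (P / Real.sqrt (γ * P / a)) = Real.sqrt (γ * a * P) := by
  have hx : 0 ≤ γ * P / a := by positivity
  calc γ * (P / Real.sqrt (γ * P / a))
      = a * (γ * P / a / Real.sqrt (γ * P / a)) := by field_simp
    _ = Real.sqrt (a ^ 2) * Real.sqrt (γ * P / a) := by
        rw [Real.div_sqrt, Real.sqrt_sq ha.le]
    _ = Real.sqrt (γ * a * P) := by
        rw [← Real.sqrt_mul (sq_nonneg a)]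
        congr 1
        field_simp

theorem speedup_ratio_closed_form (α γ P M Bs Bd : ℝ)
    (hα : 1 ≤ α) (hγ : 0 < γ) (hP : 0 < P) (hM : 0 < M) (hBs : 0 < Bs)
    (hBd : Bd = Bs / γ) :
    ((1 + α) * M * P / Bs) /
        ((2 * M / Bd) * (P / Real.sqrt (Bs * P / ((1 + α) * Bd)) + 1)) =
      (1 + α) * P / (2 * Real.sqrt (γ * (1 + α) * P) + 2 * γ) := by
  subst hBd
  have hα' : 0 < 1 + α := by linarith
  have hL : Bs * P / ((1 + α) * (Bs / γ)) = γ * P / (1 + α) := by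
    field_simp
  rw [fedAvg_div_fedP2P_time _ _ _ _ _ _ hγ.ne' hM.ne' hBs.ne', hL,
    mul_div_sqrt_optimal_count _ _ _ hα' hγ.le hP.le]
end
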